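/- The set of lattices in H_n: for r = (r_1, …, r_n) with r_i | r_{i+1}, the subgroup Γ_r generated by exp(r_1 X_1), …, exp(r_n X_n), exp(X_{n+1}), …, exp(X_{2n}), exp(Z) is a lattice (discrete cocompact subgroup) of H_n, and the image P_0(Γ_r) ⊂ ℝ^{2n} under the horizontal projection is the lattice generated by r_1 e_1, …, r_n e_n, e_{n+1}, …, e_{2n}. -/

import Mathlib

open scoped BigOperators

/-- The `(2n+1)`-dimensional Heisenberg group `H_n` in exponential coordinates
`(x, y, z)` with `x, y ∈ ℝⁿ`, `z ∈ ℝ`; brackets `[X_i, X_{i+n}] = Z`. -/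
@[ext]
structure Heis (n : ℕ) where
  x : Fin n → ℝ
  y : Fin n → ℝ
  z : ℝ

/-- The symplectic pairing entering the Heisenberg group law. -/
def heisS {n : ℕ} (x y x' y' : Fin n → ℝ) : ℝ := ∑ i, (x i * y' i - y i * x' i)

noncomputable instance {n : ℕ} : Mul (Heis n) :=
  ⟨fun p q => ⟨p.x + q.x, p.y + q.y, p.z + q.z + heisS p.x p.y q.x q.y / 2⟩⟩

instance {n : ℕ} : One (Heis n) := ⟨⟨0, 0, 0⟩⟩

noncomputable instance {n : ℕ} : Inv (Heis n) := ⟨fun p => ⟨-p.x, -p.y, -p.z⟩⟩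

@[simp] lemma Heis.mul_x {n : ℕ} (p q : Heis n) : (p * q).x = p.x + q.x := rfl
@[simp] lemma Heis.mul_y {n : ℕ} (p q : Heis n) : (p * q).y = p.y + q.y := rfl
@[simp] lemma Heis.mul_z {n : ℕ} (p q : Heis n) :
    (p * q).z = p.z + q.z + heisS p.x p.y q.x q.y / 2 := rfl
@[simp] lemma Heis.one_x {n : ℕ} : (1 : Heis n).x = 0 := rfl
@[simp] lemma Heis.one_y {n : ℕ} : (1 : Heis n).y = 0 := rfl
@[simp] lemma Heis.one_z {n : ℕ} : (1 : Heis n).z = 0 := rfl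
@[simp] lemma Heis.inv_x {n : ℕ} (p : Heis n) : p⁻¹.x = -p.x := rfl
@[simp] lemma Heis.inv_y {n : ℕ} (p : Heis n) : p⁻¹.y = -p.y := rfl
@[simp] lemma Heis.inv_z {n : ℕ} (p : Heis n) : p⁻¹.z = -p.z := rfl

noncomputable instance {n : ℕ} : Group (Heis n) where
  mul_assoc a b c := by
    ext i <;>
      simp only [Heis.mul_x, Heis.mul_y, Heis.mul_z, Pi.add_apply, heisS,
        Finset.sum_sub_distrib, Finset.sum_add_distrib, add_mul, mul_add] <;> ring
  one_mul a := by ext i <;> simp [heisS]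
  mul_one a := by ext i <;> simp [heisS]
  inv_mul_cancel a := by
    ext i <;> simp [heisS] <;> exact Finset.sum_eq_zero fun j _ => by ring

instance {n : ℕ} : TopologicalSpace (Heis n) :=
  TopologicalSpace.induced (fun p => (p.x, p.y, p.z)) inferInstance

/-- The horizontal projection `P₀ : H_n → ℝ^{2n}`, `log` followed by projection onto
`span{X_1,…,X_{2n}}`. -/
def heisP0 {n : ℕ} (p : Heis n) : (Fin n → ℝ) × (Fin n → ℝ) := (p.x, p.y)

/-- The generating set of `Γ_r`: `exp(r_i X_i)`, `exp(X_{n+i})`, `exp Z`. -/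
noncomputable def heisGen (n : ℕ) (r : Fin n → ℕ) : Set (Heis n) :=
  (Set.range fun i : Fin n =>
    (⟨fun j => if j = i then (r i : ℝ) else 0, 0, 0⟩ : Heis n)) ∪
  (Set.range fun i : Fin n =>
    (⟨0, fun j => if j = i then (1 : ℝ) else 0, 0⟩ : Heis n)) ∪
  {(⟨0, 0, 1⟩ : Heis n)}

/-! In exponential coordinates of the second kind, `p = exp(x·X) exp(y·Y) exp(w Z)` with
`w = z - x·y/2`, the group law reads `(x, y, w)(x', y', w') = (x + x', y + y', w + w' - x'·y)`.
Hence `Γ_r` is exactly the set of points with `x ∈ ∏ r_i ℤ`, `y ∈ ℤⁿ`, `w ∈ ℤ`. These coordinates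
are a homeomorphism onto `ℝ^{2n+1}`, so `Γ_r` is discrete, and left multiplication by `Γ_r`
reduces `x`, then `y`, then `w` into the compact box `∏ [0, r_i] × [0, 1]ⁿ × [0, 1]`. -/

open Set Multiplicative AddSubgroup

lemma AddSubgroup.mul_mem_zmultiples_one {R : Type*} [Ring R] {a b : R}
    (ha : a ∈ zmultiples (1 : R)) (hb : b ∈ zmultiples (1 : R)) : a * b ∈ zmultiples (1 : R) := by
  obtain ⟨k, rfl⟩ := ha
  obtain ⟨m, rfl⟩ := hb
  exact ⟨k * m, by simp [mul_smul]⟩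

lemma AddSubgroup.natCast_mem_zmultiples_one {R : Type*} [Ring R] (k : ℕ) :
    (k : R) ∈ zmultiples (1 : R) := by
  exact_mod_cast intCast_mem_zmultiples_one (R := R) k

lemma MonoidHom.ofAdd_mem_of_forall_mem_zmultiples {ι A G : Type*} [Finite ι] [DecidableEq ι]
    [AddCommGroup A] [Group G] (f : Multiplicative (ι → A) →* G) {H : Subgroup G} {g : ι → A}
    (hg : ∀ i, f (ofAdd (Pi.single i (g i))) ∈ H) {x : ι → A}
    (hx : ∀ i, x i ∈ zmultiples (g i)) : f (ofAdd x) ∈ H := by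
  have : AddSubgroup.pi univ (fun i => zmultiples (g i)) ≤ (H.comap f).toAddSubgroup' :=
    pi_le_iff.2 fun i => by rw [AddMonoidHom.map_zmultiples, zmultiples_le]; exact hg i
  exact this ((mem_pi _).2 fun i _ => hx i)

namespace Heis

variable {n : ℕ}

lemma continuous_coords : Continuous fun p : Heis n => (p.x, p.y, p.z) := continuous_induced_dom

@[fun_prop] lemma continuous_x : Continuous (x : Heis n → Fin n → ℝ) := continuous_coords.fst
@[fun_prop] lemma continuous_y : Continuous (y : Heis n → Fin n → ℝ) := continuous_coords.snd.fst
@[fun_prop] lemma continuous_z : Continuous (z : Heis n → ℝ) := continuous_coords.snd.snd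

noncomputable def zSecondKind (p : Heis n) : ℝ := p.z - (∑ i, p.x i * p.y i) / 2

@[fun_prop] lemma continuous_zSecondKind : Continuous (zSecondKind : Heis n → ℝ) := by
  unfold zSecondKind; fun_prop

lemma zSecondKind_mul (p q : Heis n) :
    (p * q).zSecondKind = p.zSecondKind + q.zSecondKind - ∑ i, q.x i * p.y i := by
  have key : ∑ i, (p.x i + q.x i) * (p.y i + q.y i) = ∑ i, (p.x i * q.y i - p.y i * q.x i)
      + ∑ i, p.x i * p.y i + ∑ i, q.x i * q.y i + 2 * ∑ i, q.x i * p.y i := by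
    simp only [← Finset.sum_add_distrib, Finset.mul_sum]
    exact Finset.sum_congr rfl fun i _ => by ring
  simp only [zSecondKind, mul_x, mul_y, mul_z, heisS, Pi.add_apply]
  linear_combination -key / 2

lemma zSecondKind_inv (p : Heis n) :
    p⁻¹.zSecondKind = -p.zSecondKind - ∑ i, p.x i * p.y i := by
  simp only [zSecondKind, inv_x, inv_y, inv_z, Pi.neg_apply, neg_mul_neg]
  ring

noncomputable def secondKindCoords : Heis n ≃ₜ (Fin n → ℝ) × (Fin n → ℝ) × ℝ where
  toFun p := (p.x, p.y, p.zSecondKind)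
  invFun v := ⟨v.1, v.2.1, v.2.2 + (∑ i, v.1 i * v.2.1 i) / 2⟩
  left_inv p := by simp [zSecondKind]
  right_inv v := by simp [zSecondKind]
  continuous_toFun := by fun_prop
  continuous_invFun := continuous_induced_rng.2 (by simp only [Function.comp_def]; fun_prop)

@[simp] lemma secondKindCoords_apply (p : Heis n) :
    secondKindCoords p = (p.x, p.y, p.zSecondKind) := rfl

@[simp] lemma x_secondKindCoords_symm (v : (Fin n → ℝ) × (Fin n → ℝ) × ℝ) :
    (secondKindCoords.symm v).x = v.1 := rfl
@[simp] lemma y_secondKindCoords_symm (v : (Fin n → ℝ) × (Fin n → ℝ) × ℝ) :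
    (secondKindCoords.symm v).y = v.2.1 := rfl
@[simp] lemma zSecondKind_secondKindCoords_symm (v : (Fin n → ℝ) × (Fin n → ℝ) × ℝ) :
    (secondKindCoords.symm v).zSecondKind = v.2.2 := by
  simp [zSecondKind, secondKindCoords]

def lattice (r : Fin n → ℕ) : Subgroup (Heis n) where
  carrier := {p | (∀ i, p.x i ∈ zmultiples (r i : ℝ)) ∧ (∀ i, p.y i ∈ zmultiples (1 : ℝ)) ∧
    p.zSecondKind ∈ zmultiples (1 : ℝ)}
  one_mem' := ⟨fun _ => zero_mem _, fun _ => zero_mem _, by simp [zSecondKind]⟩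
  mul_mem' := by
    rintro p q ⟨hpx, hpy, hpz⟩ ⟨hqx, hqy, hqz⟩
    refine ⟨fun i => add_mem (hpx i) (hqx i), fun i => add_mem (hpy i) (hqy i), ?_⟩
    rw [zSecondKind_mul]
    refine sub_mem (add_mem hpz hqz) (sum_mem fun i _ => mul_mem_zmultiples_one ?_ (hpy i))
    exact zmultiples_le.2 (natCast_mem_zmultiples_one (r i)) (hqx i)
  inv_mem' := by
    rintro p ⟨hpx, hpy, hpz⟩
    refine ⟨fun i => neg_mem (hpx i), fun i => neg_mem (hpy i), ?_⟩
    rw [zSecondKind_inv]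
    refine sub_mem (neg_mem hpz) (sum_mem fun i _ => mul_mem_zmultiples_one ?_ (hpy i))
    exact zmultiples_le.2 (natCast_mem_zmultiples_one (r i)) (hpx i)

def expX : Multiplicative (Fin n → ℝ) →* Heis n where
  toFun u := ⟨u.toAdd, 0, 0⟩
  map_one' := rfl
  map_mul' u v := by ext <;> simp [heisS]

def expY : Multiplicative (Fin n → ℝ) →* Heis n where
  toFun u := ⟨0, u.toAdd, 0⟩
  map_one' := rfl
  map_mul' u v := by ext <;> simp [heisS]

def expZ : Multiplicative ℝ →* Heis n where
  toFun t := ⟨0, 0, t.toAdd⟩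
  map_one' := rfl
  map_mul' s t := by ext <;> simp [heisS]

lemma expX_mul_expY_mul_expZ (p : Heis n) :
    expX (ofAdd p.x) * expY (ofAdd p.y) * expZ (ofAdd p.zSecondKind) = p := by
  ext <;> simp [expX, expY, expZ, zSecondKind, heisS]

lemma closure_heisGen (r : Fin n → ℕ) : Subgroup.closure (heisGen n r) = lattice r := by
  refine le_antisymm ((Subgroup.closure_le _).2 ?_) fun p ⟨hx, hy, hz⟩ => ?_
  · rintro _ ((⟨i, rfl⟩ | ⟨i, rfl⟩) | rfl)
    · refine ⟨fun j => ?_, fun _ => zero_mem _, by simp [zSecondKind]⟩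
      dsimp only
      split_ifs with h
      · exact h ▸ mem_zmultiples _
      · exact zero_mem _
    · refine ⟨fun _ => zero_mem _, fun j => ?_, by simp [zSecondKind]⟩
      dsimp only
      split_ifs
      · exact mem_zmultiples _
      · exact zero_mem _
    · exact ⟨fun _ => zero_mem _, fun _ => zero_mem _, by simp [zSecondKind]⟩
  rw [← expX_mul_expY_mul_expZ p]
  refine mul_mem (mul_mem ?_ ?_) ?_
  · refine expX.ofAdd_mem_of_forall_mem_zmultiples (fun i => Subgroup.subset_closure ?_) hx
    exact Or.inl (Or.inl ⟨i, by ext j <;> simp [expX, Pi.single_apply]⟩)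
  · refine expY.ofAdd_mem_of_forall_mem_zmultiples (fun i => Subgroup.subset_closure ?_) hy
    exact Or.inl (Or.inr ⟨i, by ext j <;> simp [expY, Pi.single_apply]⟩)
  · obtain ⟨k, hk⟩ := hz
    rw [← hk, ofAdd_zsmul, map_zpow]
    have hgen : expZ (ofAdd (1 : ℝ)) ∈ heisGen n r := Or.inr rfl
    exact zpow_mem (Subgroup.subset_closure hgen) k

instance discreteTopology_lattice (r : Fin n → ℕ) : DiscreteTopology (lattice r) := by
  let f : lattice r → (∀ i, zmultiples (r i : ℝ)) × (Fin n → zmultiples (1 : ℝ)) ×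
      zmultiples (1 : ℝ) := fun p =>
    (fun i => ⟨p.1.x i, p.2.1 i⟩, fun i => ⟨p.1.y i, p.2.2.1 i⟩, ⟨p.1.zSecondKind, p.2.2.2⟩)
  have hf : Continuous f := by fun_prop
  refine DiscreteTopology.of_continuous_injective hf fun p q hpq =>
    Subtype.ext <| secondKindCoords.injective ?_
  simp only [f, Prod.mk.injEq, funext_iff, Subtype.mk.injEq] at hpq
  simp [hpq, funext_iff]

def fundamentalBox (r : Fin n → ℕ) : Set ((Fin n → ℝ) × (Fin n → ℝ) × ℝ) :=
  univ.pi (fun i => Icc 0 (r i : ℝ)) ×ˢ univ.pi (fun _ => Icc 0 1) ×ˢ Icc 0 1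

lemma isCompact_fundamentalBox (r : Fin n → ℕ) : IsCompact (fundamentalBox r) :=
  (isCompact_univ_pi fun _ => isCompact_Icc).prod
    ((isCompact_univ_pi fun _ => isCompact_Icc).prod isCompact_Icc)

lemma exists_mem_lattice_mul_mem_fundamentalBox {r : Fin n → ℕ} (hr : ∀ i, 0 < r i)
    (g : Heis n) : ∃ γ ∈ lattice r, secondKindCoords (γ * g) ∈ fundamentalBox r := by
  choose a ha using fun i =>
    (existsUnique_add_zsmul_mem_Ico (Nat.cast_pos.2 (hr i)) (g.x i) (0 : ℝ)).exists
  choose b hb using fun i => (existsUnique_add_zsmul_mem_Ico one_pos (g.y i) (0 : ℝ)).exists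
  obtain ⟨c, hc⟩ := (existsUnique_add_zsmul_mem_Ico one_pos
    (g.zSecondKind - ∑ i, g.x i * (b i • (1 : ℝ))) (0 : ℝ)).exists
  refine ⟨secondKindCoords.symm (fun i => a i • (r i : ℝ), fun i => b i • (1 : ℝ), c • 1),
    ⟨fun i => ⟨a i, rfl⟩, fun i => ⟨b i, rfl⟩, by simp⟩, ?_⟩
  simp only [fundamentalBox, secondKindCoords_apply, zSecondKind_mul, mul_x, mul_y,
    x_secondKindCoords_symm, y_secondKindCoords_symm, zSecondKind_secondKindCoords_symm,
    mem_prod, mem_univ_pi, Pi.add_apply, zero_add] at ha hb hc ⊢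
  refine ⟨fun i => ?_, fun i => ?_, ?_⟩
  · rw [add_comm]; exact Ico_subset_Icc_self (ha i)
  · rw [add_comm]; exact Ico_subset_Icc_self (hb i)
  · convert Ico_subset_Icc_self hc using 1; ring

lemma heisP0_image_lattice (r : Fin n → ℕ) : heisP0 '' (lattice r : Set (Heis n)) =
    {v | ∃ a b : Fin n → ℤ, v = (fun i => (r i : ℝ) * (a i : ℝ), fun i => (b i : ℝ))} := by
  ext v
  constructor
  · rintro ⟨p, ⟨hx, hy, -⟩, rfl⟩
    choose a ha using hx
    choose b hb using hy
    refine ⟨a, b, ?_⟩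
    ext i <;> simp [heisP0, ← ha, ← hb, mul_comm]
  · rintro ⟨a, b, rfl⟩
    refine ⟨secondKindCoords.symm (fun i => (r i : ℝ) * a i, fun i => b i, 0),
      ⟨fun i => ?_, fun i => intCast_mem_zmultiples_one _, by simp⟩, rfl⟩
    exact ⟨a i, by simp [mul_comm]⟩

end Heis

theorem stmt_18_general (n : ℕ) (r : Fin n → ℕ) (hr : ∀ i, 0 < r i) :
    DiscreteTopology (Subgroup.closure (heisGen n r)) ∧
    (∃ K : Set (Heis n), IsCompact K ∧
      ∀ g : Heis n, ∃ γ ∈ Subgroup.closure (heisGen n r), γ * g ∈ K) ∧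
    heisP0 '' (Subgroup.closure (heisGen n r) : Set (Heis n)) =
      {v | ∃ a b : Fin n → ℤ,
        v = (fun i => (r i : ℝ) * (a i : ℝ), fun i => (b i : ℝ))} := by
  rw [Heis.closure_heisGen]
  exact ⟨inferInstance,
    ⟨_, Heis.secondKindCoords.isCompact_preimage.2 (Heis.isCompact_fundamentalBox r),
      Heis.exists_mem_lattice_mul_mem_fundamentalBox hr⟩,
    Heis.heisP0_image_lattice r⟩

/-- For `r` with `r_i ∣ r_{i+1}`, the subgroup `Γ_r` generated by
`exp(r_1X_1),…,exp(r_nX_n),exp(X_{n+1}),…,exp(X_{2n}),exp Z` is a lattice of `H_n`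
(discrete and cocompact), and its horizontal projection is the lattice of `ℝ^{2n}`
generated by `r_1e_1,…,r_ne_n,e_{n+1},…,e_{2n}`. -/
theorem stmt_18 (n : ℕ) (r : Fin n → ℕ) (hr : ∀ i, 0 < r i)
    (hdvd : ∀ i : Fin n, ∀ h : (i : ℕ) + 1 < n, r i ∣ r ⟨(i : ℕ) + 1, h⟩) :
    DiscreteTopology (Subgroup.closure (heisGen n r)) ∧
    (∃ K : Set (Heis n), IsCompact K ∧
      ∀ g : Heis n, ∃ γ ∈ Subgroup.closure (heisGen n r), γ * g ∈ K) ∧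
    heisP0 '' (Subgroup.closure (heisGen n r) : Set (Heis n)) =
      {v | ∃ a b : Fin n → ℤ,
        v = (fun i => (r i : ℝ) * (a i : ℝ), fun i => (b i : ℝ))} :=
  stmt_18_general n r hr
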